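/- Let n ≥ 1 and 0 ≤ s < t ≤ n, and suppose both α = (i_0,…,i_n) and α' = (i_0,…,i_s+1,…,i_t−1,…,i_n) (the tuple obtained from α by replacing i_s with i_s+1 and i_t with i_t−1) belong to ω_n. Then for every array a of weight α' and every array b of weight α, deg(a) − deg(b) = i_t − i_s − 1, where deg denotes the number of neighbors in G_n. Consequently, if (i_0,…,i_n) ∈ ω_n with i_0 ≤ i_1 ≤ ⋯ ≤ i_n, then every array of weight (i_0,…,i_n) has exactly Σ_{k=0}^{n} m_k + Σ_{k : i_k < k} (k − i_k) neighbors in G_n, where m_k = i_k + (i_k+1) + ⋯ + (k−1) if i_k < k, m_k = −(i_k + (i_k−1) + ⋯ + (k+1)) if i_k > k, and m_k = 0 if i_k = k. -/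

import Mathlib

/-- `UT n`: strictly upper triangular 0-1 arrays `(a_{i,j})_{0 ≤ i < j ≤ n}`,
encoded as functions on `Fin (n+1) × Fin (n+1)` vanishing off the region `i < j`. -/
def UT (n : ℕ) : Type :=
  {a : Fin (n + 1) → Fin (n + 1) → ℤ //
    ∀ i j : Fin (n + 1), (i < j → a i j = 0 ∨ a i j = 1) ∧ (¬ i < j → a i j = 0)}

/-- Adjacency in `G_n`: `a` and `b` differ exactly on a triple of positions
`(i,j), (j,l), (i,l)` with `i < j < l`, where one of them has entries `1, 1, 0` and
the other `0, 0, 1`. -/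
def UTAdj {n : ℕ} (a b : UT n) : Prop :=
  ∃ i j l : Fin (n + 1), i < j ∧ j < l ∧
    ((a.1 i j = 1 ∧ a.1 j l = 1 ∧ a.1 i l = 0 ∧
        b.1 i j = 0 ∧ b.1 j l = 0 ∧ b.1 i l = 1) ∨
      (b.1 i j = 1 ∧ b.1 j l = 1 ∧ b.1 i l = 0 ∧
        a.1 i j = 0 ∧ a.1 j l = 0 ∧ a.1 i l = 1)) ∧
    ∀ s t : Fin (n + 1),
      ¬ ((s = i ∧ t = j) ∨ (s = j ∧ t = l) ∨ (s = i ∧ t = l)) → a.1 s t = b.1 s t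

/-- The weight of an array: `w_s(a) = ∑_{k<s} (1 - a_{k,s}) + ∑_{k>s} a_{s,k}`. -/
def UTweight {n : ℕ} (a : UT n) : Fin (n + 1) → ℤ := fun s =>
  (∑ k : Fin (n + 1), if k < s then 1 - a.1 k s else 0) +
    ∑ k : Fin (n + 1), if s < k then a.1 s k else 0

/-- Membership in `ω_n`: the tuple sums to `0 + 1 + ⋯ + n` and every subset of the
entries sums to at least `0 + 1 + ⋯ + (s-1)` where `s` is the size of the subset. -/
def InOmega {n : ℕ} (c : Fin (n + 1) → ℤ) : Prop :=
  (∑ k : Fin (n + 1), c k = ∑ k : Fin (n + 1), (k : ℤ)) ∧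
    ∀ s : Finset (Fin (n + 1)), (∑ t ∈ Finset.range s.card, (t : ℤ)) ≤ ∑ k ∈ s, c k

/-- The summand `m_k` in the degree formula: `m_k = i_k + (i_k+1) + ⋯ + (k-1)` if
`i_k < k`, `m_k = -(i_k + (i_k-1) + ⋯ + (k+1))` if `i_k > k`, and `0` if `i_k = k`. -/
noncomputable def mval {n : ℕ} (α : Fin (n + 1) → ℤ) (k : Fin (n + 1)) : ℤ :=
  if α k < (k : ℤ) then ∑ t ∈ Finset.Icc (α k) ((k : ℤ) - 1), t
  else if (k : ℤ) < α k then -∑ t ∈ Finset.Icc ((k : ℤ) + 1) (α k), t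
  else 0

/-!
An array `a ∈ G_n` is a tournament on `{0, …, n}`: for `i < j`, `a_{i,j} = 1` means that `i`
beats `j`. Its weight is its score vector, and passing to a neighbour reverses a cyclic
triangle, so the neighbours of `a` correspond to its cyclic triangles. A triangle that is not
cyclic has exactly one vertex beating the other two, hence
`2 · #{cyclic triangles} = ∑_v v (v - 1) - ∑_v w_v (w_v - 1)`,
the first sum coming from the transitive tournament `0`, whose scores are `0, …, n`.
The degree is therefore a function of the weight alone, and both claims are arithmetic with this
formula; the closed form only uses `∑_v w_v = ∑_v v`.
-/

open Finset

theorem two_mul_sum_sum_lt_mul {ι : Type*} [Fintype ι] [LinearOrder ι] {e : ι → ℤ}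
    (he : ∀ x, e x = 0 ∨ e x = 1) :
    2 * ∑ x, ∑ y, (if x < y then e x * e y else 0) = (∑ x, e x) * (∑ x, e x - 1) := by
  have hsplit : ∀ x y, e x * e y =
      (if x < y then e x * e y else 0) + (if y < x then e y * e x else 0) +
        (if x = y then e x else 0) := by
    intro x y
    rcases lt_trichotomy x y with h | rfl | h
    · simp [h, h.not_gt, h.ne]
    · rcases he x with h | h <;> simp [h]
    · simp [h, h.not_gt, h.ne', mul_comm]
  calc 2 * ∑ x, ∑ y, (if x < y then e x * e y else 0)
      = ∑ x, ∑ y, (if x < y then e x * e y else 0) +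
          ∑ x, ∑ y, (if y < x then e y * e x else 0) := by
        rw [sum_comm (f := fun x y => if y < x then e y * e x else 0)]
        ring
    _ = ∑ x, ∑ y, e x * e y - ∑ x, e x := by
        simp only [sum_congr rfl fun x _ => sum_congr rfl fun y _ => hsplit x y,
          sum_add_distrib, sum_ite_eq, mem_univ, if_true]
        ring
    _ = (∑ x, e x) * (∑ x, e x - 1) := by
        rw [mul_sub, mul_one, sum_mul_sum]

theorem sum_update_update {ι α M : Type*} [Fintype ι] [DecidableEq ι] [AddCommGroup M]
    (g : α → M) (f : ι → α) {s t : ι} (hst : s ≠ t) (x y : α) :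
    ∑ v, g (Function.update (Function.update f s x) t y v) =
      ∑ v, g (f v) + (g x - g (f s)) + (g y - g (f t)) := by
  have sum_update : ∀ (h : ι → M) (i : ι) (b : M),
      ∑ v, Function.update h i b v = ∑ v, h v + (b - h i) := by
    intro h i b
    rw [sum_update_of_mem (mem_univ i), sum_eq_add_sum_sdiff_singleton_of_mem (mem_univ i) h]
    abel
  simp only [Function.apply_update (fun _ => g), sum_update, Function.update_of_ne hst.symm]

theorem two_mul_sum_Icc_id {a b : ℤ} (h : a - 1 ≤ b) :
    2 * ∑ t ∈ Icc a b, t = b * (b + 1) - a * (a - 1) := by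
  induction b, h using Int.leInduction with
  | base =>
    rw [Icc_eq_empty_of_lt (sub_one_lt a), sum_empty]
    ring
  | succ b hb ih =>
    rw [← insert_Icc_right_eq_Icc_add_one (by omega), sum_insert (by simp), mul_add, ih]
    ring

namespace UT

variable {n : ℕ}

lemma entry_eq_zero_or_one (a : UT n) {i j : Fin (n + 1)} (h : i < j) :
    a.1 i j = 0 ∨ a.1 i j = 1 :=
  (a.2 i j).1 h

def flipAt (a : UT n) (S : Finset (Fin (n + 1) × Fin (n + 1))) : UT n :=
  ⟨fun s t => if (s, t) ∈ S ∧ s < t then 1 - a.1 s t else a.1 s t, fun s t => by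
    dsimp only
    refine ⟨fun hst => ?_, fun hst => ?_⟩
    · rcases a.entry_eq_zero_or_one hst with h | h <;> split_ifs <;> omega
    · rw [if_neg (fun h => hst h.2)]
      exact (a.2 s t).2 hst⟩

lemma flipAt_apply_ne_iff (a : UT n) (S : Finset (Fin (n + 1) × Fin (n + 1)))
    (s t : Fin (n + 1)) : (a.flipAt S).1 s t ≠ a.1 s t ↔ (s, t) ∈ S ∧ s < t := by
  show (if (s, t) ∈ S ∧ s < t then 1 - a.1 s t else a.1 s t) ≠ a.1 s t ↔ _
  split_ifs with h
  · simp only [h, and_self, iff_true]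
    omega
  · simp only [h, iff_false, ne_eq, not_not]

lemma flipAt_inj {a : UT n} {S S' : Finset (Fin (n + 1) × Fin (n + 1))}
    (hS : ∀ p ∈ S, p.1 < p.2) (hS' : ∀ p ∈ S', p.1 < p.2) :
    a.flipAt S = a.flipAt S' ↔ S = S' := by
  refine ⟨fun h => Finset.ext fun ⟨s, t⟩ => ?_, fun h => h ▸ rfl⟩
  have := flipAt_apply_ne_iff a S s t
  rw [h, flipAt_apply_ne_iff] at this
  exact ⟨fun hp => (this.2 ⟨hp, hS _ hp⟩).1, fun hp => (this.1 ⟨hp, hS' _ hp⟩).1⟩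

def triangle (i j l : Fin (n + 1)) : Finset (Fin (n + 1) × Fin (n + 1)) :=
  {(i, j), (j, l), (i, l)}

lemma lt_of_mem_triangle {i j l : Fin (n + 1)} (hij : i < j) (hjl : j < l) :
    ∀ p ∈ triangle i j l, p.1 < p.2 := by
  simp only [triangle, mem_insert, mem_singleton]
  rintro p (rfl | rfl | rfl)
  exacts [hij, hjl, hij.trans hjl]

lemma triangle_inj {i j l i' j' l' : Fin (n + 1)} (hij : i < j)
    (hij' : i' < j') (hjl' : j' < l') (h : triangle i j l = triangle i' j' l') :
    i = i' ∧ j = j' ∧ l = l' := by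
  have h₁ : (i, j) ∈ triangle i' j' l' := h ▸ by simp [triangle]
  have h₂ : (j, l) ∈ triangle i' j' l' := h ▸ by simp [triangle]
  simp only [triangle, mem_insert, mem_singleton, Prod.mk.injEq] at h₁ h₂
  rw [Fin.lt_def] at hij hij' hjl'
  simp only [Fin.ext_iff] at h₁ h₂ ⊢
  omega

def IsCyclic (a : UT n) (i j l : Fin (n + 1)) : Prop :=
  (a.1 i j = 1 ∧ a.1 j l = 1 ∧ a.1 i l = 0) ∨ (a.1 i j = 0 ∧ a.1 j l = 0 ∧ a.1 i l = 1)

lemma flipAt_triangle_apply (a : UT n) {i j l : Fin (n + 1)} (hij : i < j) (hjl : j < l)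
    (s t : Fin (n + 1)) :
    (a.flipAt (triangle i j l)).1 s t =
      if (s, t) ∈ triangle i j l then 1 - a.1 s t else a.1 s t :=
  if_congr ⟨And.left, fun h => ⟨h, lt_of_mem_triangle hij hjl _ h⟩⟩ rfl rfl

lemma mem_triangle {i j l s t : Fin (n + 1)} :
    (s, t) ∈ triangle i j l ↔
      (s = i ∧ t = j) ∨ (s = j ∧ t = l) ∨ (s = i ∧ t = l) := by
  simp [triangle]

lemma utAdj_iff (a c : UT n) :
    UTAdj a c ↔
      ∃ i j l, i < j ∧ j < l ∧ a.IsCyclic i j l ∧ c = a.flipAt (triangle i j l) := by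
  constructor
  · rintro ⟨i, j, l, hij, hjl, hpat, hagree⟩
    refine ⟨i, j, l, hij, hjl, by unfold IsCyclic; tauto, Subtype.ext (funext₂ fun s t => ?_)⟩
    rw [flipAt_triangle_apply a hij hjl]
    split_ifs with hst
    · rcases mem_triangle.1 hst with ⟨rfl, rfl⟩ | ⟨rfl, rfl⟩ | ⟨rfl, rfl⟩ <;> omega
    · exact (hagree s t (mt mem_triangle.2 hst)).symm
  · rintro ⟨i, j, l, hij, hjl, hcyc, rfl⟩
    refine ⟨i, j, l, hij, hjl, ?_, fun s t hst => ?_⟩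
    · simp only [flipAt_triangle_apply a hij hjl, mem_triangle, true_and, and_true, true_or,
        or_true, if_true]
      unfold IsCyclic at hcyc
      omega
    · rw [flipAt_triangle_apply a hij hjl, if_neg (mt mem_triangle.1 hst)]

instance (a : UT n) (i j l : Fin (n + 1)) : Decidable (a.IsCyclic i j l) := by
  unfold IsCyclic; infer_instance

def cyclicTriples (a : UT n) : Finset (Fin (n + 1) × Fin (n + 1) × Fin (n + 1)) :=
  {p | p.1 < p.2.1 ∧ p.2.1 < p.2.2 ∧ a.IsCyclic p.1 p.2.1 p.2.2}

lemma mem_cyclicTriples {a : UT n} {i j l : Fin (n + 1)} :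
    (i, j, l) ∈ a.cyclicTriples ↔ i < j ∧ j < l ∧ a.IsCyclic i j l := by
  simp [cyclicTriples]

theorem card_utAdj (a : UT n) : Nat.card {c // UTAdj a c} = #a.cyclicTriples := by
  have himage : {c | UTAdj a c} =
      (fun p : Fin (n + 1) × Fin (n + 1) × Fin (n + 1) => a.flipAt (triangle p.1 p.2.1 p.2.2)) ''
        a.cyclicTriples := by
    ext c
    simp [utAdj_iff, cyclicTriples, eq_comm, and_assoc]
  rw [← Set.coe_ofPred, Nat.card_coe_set_eq, himage, Set.InjOn.ncard_image, Set.ncard_coe_finset]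
  rintro ⟨i, j, l⟩ hp ⟨i', j', l'⟩ hp' h
  rw [mem_coe, mem_cyclicTriples] at hp hp'
  rw [flipAt_inj (lt_of_mem_triangle hp.1 hp.2.1) (lt_of_mem_triangle hp'.1 hp'.2.1)] at h
  obtain ⟨rfl, rfl, rfl⟩ := triangle_inj hp.1 hp'.1 hp'.2.1 h
  rfl

def beats (a : UT n) (v x : Fin (n + 1)) : ℤ :=
  (if x < v then 1 - a.1 x v else 0) + (if v < x then a.1 v x else 0)

lemma beats_self (a : UT n) (v : Fin (n + 1)) : a.beats v v = 0 := by
  simp [beats]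

lemma beats_eq_zero_or_one (a : UT n) (v x : Fin (n + 1)) :
    a.beats v x = 0 ∨ a.beats v x = 1 := by
  rcases lt_trichotomy v x with h | rfl | h
  · simp only [beats, h, h.not_gt, if_true, if_false, zero_add]
    exact a.entry_eq_zero_or_one h
  · simp [beats_self]
  · simp only [beats, h, h.not_gt, if_true, if_false, add_zero]
    rcases a.entry_eq_zero_or_one h with h' | h' <;> simp [h']

lemma utWeight_eq_sum_beats (a : UT n) (v : Fin (n + 1)) :
    UTweight a v = ∑ x, a.beats v x := by
  rw [UTweight, ← sum_add_distrib]
  rfl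

def pairsBeatenBy (a : UT n) (v : Fin (n + 1)) : ℤ :=
  ∑ x, ∑ y, if x < y then a.beats v x * a.beats v y else 0

lemma two_mul_pairsBeatenBy (a : UT n) (v : Fin (n + 1)) :
    2 * a.pairsBeatenBy v = UTweight a v * (UTweight a v - 1) := by
  rw [pairsBeatenBy, two_mul_sum_sum_lt_mul (a.beats_eq_zero_or_one v), utWeight_eq_sum_beats]

lemma beats_mul_add_isCyclic (a : UT n) {i j l : Fin (n + 1)} (hij : i < j) (hjl : j < l) :
    a.beats i j * a.beats i l + a.beats j i * a.beats j l + a.beats l i * a.beats l j +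
      (if a.IsCyclic i j l then 1 else 0) = 1 := by
  have hil := hij.trans hjl
  simp only [beats, hij, hjl, hil, hij.not_gt, hjl.not_gt, hil.not_gt, if_true, if_false,
    zero_add, add_zero, IsCyclic]
  rcases a.entry_eq_zero_or_one hij with h₁ | h₁ <;>
    rcases a.entry_eq_zero_or_one hjl with h₂ | h₂ <;>
    rcases a.entry_eq_zero_or_one hil with h₃ | h₃ <;>
    simp [h₁, h₂, h₃]

lemma sum_pairsBeatenBy (a : UT n) :
    ∑ v, a.pairsBeatenBy v =
      ∑ i, ∑ j, ∑ l, if i < j ∧ j < l then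
        a.beats i j * a.beats i l + a.beats j i * a.beats j l + a.beats l i * a.beats l j
      else 0 := by
  have hsplit : ∀ v x y, (if x < y then a.beats v x * a.beats v y else 0) =
      (if v < x ∧ x < y then a.beats v x * a.beats v y else 0) +
        (if x < v ∧ v < y then a.beats v x * a.beats v y else 0) +
        (if x < y ∧ y < v then a.beats v x * a.beats v y else 0) := by
    intro v x y
    -- sort the pair by the position of `v`, which differs from `x` and `y` as `beats v v = 0`
    rcases eq_or_ne v x with rfl | hvx
    · simp [beats_self]
    rcases eq_or_ne v y with rfl | hvy
    · simp [beats_self]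
    rw [Ne, ← Fin.val_inj] at hvx hvy
    split_ifs <;> simp only [Fin.lt_def] at * <;> omega
  calc ∑ v, a.pairsBeatenBy v
      = ∑ v, ∑ x, ∑ y, (if v < x ∧ x < y then a.beats v x * a.beats v y else 0) +
          ∑ x, ∑ v, ∑ y, (if x < v ∧ v < y then a.beats v x * a.beats v y else 0) +
          ∑ x, ∑ y, ∑ v, (if x < y ∧ y < v then a.beats v x * a.beats v y else 0) := by
        simp only [pairsBeatenBy, sum_congr rfl fun v _ => sum_congr rfl fun x _ =>
          sum_congr rfl fun y _ => hsplit v x y, sum_add_distrib]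
        rw [sum_comm (f := fun v x => ∑ y, if x < v ∧ v < y then _ else 0),
          sum_comm (f := fun v x => ∑ y, if x < y ∧ y < v then _ else 0)]
        exact congrArg _ (sum_congr rfl fun _ _ => sum_comm)
    _ = _ := by
        simp only [← sum_add_distrib, ite_add_zero]

lemma card_cyclicTriples_eq_sum (a : UT n) :
    (#a.cyclicTriples : ℤ) =
      ∑ i, ∑ j, ∑ l, if i < j ∧ j < l ∧ a.IsCyclic i j l then 1 else 0 := by
  rw [cyclicTriples, card_filter, Nat.cast_sum, Fintype.sum_prod_type]
  simp only [Fintype.sum_prod_type, Nat.cast_ite, Nat.cast_one, Nat.cast_zero]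

theorem card_cyclicTriples_add_sum_pairsBeatenBy (a : UT n) :
    (#a.cyclicTriples : ℤ) + ∑ v, a.pairsBeatenBy v =
      ∑ i : Fin (n + 1), ∑ j : Fin (n + 1), ∑ l : Fin (n + 1),
        if i < j ∧ j < l then 1 else 0 := by
  rw [card_cyclicTriples_eq_sum, sum_pairsBeatenBy]
  simp only [← sum_add_distrib]
  refine sum_congr rfl fun i _ => sum_congr rfl fun j _ => sum_congr rfl fun l _ => ?_
  by_cases h : i < j ∧ j < l
  · have := beats_mul_add_isCyclic a h.1 h.2
    simp only [h, true_and, if_true]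
    linarith
  · rw [if_neg h, if_neg h, if_neg fun h' => h ⟨h'.1, h'.2.1⟩, add_zero]

instance : Zero (UT n) :=
  ⟨⟨0, fun _ _ => ⟨fun _ => Or.inl rfl, fun _ => rfl⟩⟩⟩

lemma zero_apply (i j : Fin (n + 1)) : (0 : UT n).1 i j = 0 := rfl

lemma cyclicTriples_zero : (0 : UT n).cyclicTriples = ∅ := by
  ext ⟨i, j, l⟩
  simp [mem_cyclicTriples, IsCyclic, zero_apply]

lemma utWeight_zero (v : Fin (n + 1)) : UTweight (0 : UT n) v = v := by
  simp [utWeight_eq_sum_beats, beats, zero_apply, filter_gt_eq_Iio]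

theorem two_mul_card_utAdj (a : UT n) :
    2 * (Nat.card {c // UTAdj a c} : ℤ) =
      ∑ v : Fin (n + 1), (v : ℤ) * (v - 1) - ∑ v, UTweight a v * (UTweight a v - 1) := by
  have ha := card_cyclicTriples_add_sum_pairsBeatenBy a
  have h₀ := card_cyclicTriples_add_sum_pairsBeatenBy (0 : UT n)
  rw [cyclicTriples_zero, card_empty, Nat.cast_zero, zero_add] at h₀
  have hPa : 2 * ∑ v, a.pairsBeatenBy v = ∑ v, UTweight a v * (UTweight a v - 1) := by
    simp only [mul_sum, two_mul_pairsBeatenBy]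
  have hP₀ :
      2 * ∑ v, (0 : UT n).pairsBeatenBy v = ∑ v : Fin (n + 1), (v : ℤ) * (v - 1) := by
    simp only [mul_sum, two_mul_pairsBeatenBy, utWeight_zero]
  rw [card_utAdj]
  linarith

end UT

lemma two_mul_mval_add {n : ℕ} (α : Fin (n + 1) → ℤ) (k : Fin (n + 1)) :
    2 * (mval α k + if α k < k then (k : ℤ) - α k else 0) =
      (k : ℤ) * (k - 1) - α k * (α k - 1) + 2 * (k - α k) := by
  unfold mval
  rcases lt_trichotomy (α k) k with h | h | h
  · simp only [h, if_true]
    linarith [two_mul_sum_Icc_id (a := α k) (b := k - 1) (by omega)]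
  · simp only [h, lt_irrefl, if_false]
    ring
  · simp only [h, h.not_gt, if_true, if_false]
    linarith [two_mul_sum_Icc_id (a := k + 1) (b := α k) (by omega)]

lemma two_mul_sum_mval_add {n : ℕ} (α : Fin (n + 1) → ℤ) :
    2 * ((∑ k, mval α k) + ∑ k, if α k < k then (k : ℤ) - α k else 0) =
      ∑ k : Fin (n + 1), (k : ℤ) * (k - 1) - ∑ k, α k * (α k - 1) +
        2 * (∑ k : Fin (n + 1), (k : ℤ) - ∑ k, α k) := by
  simp only [← sum_add_distrib, mul_sum, ← sum_sub_distrib, two_mul_mval_add]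

theorem degree_of_weight_subgraph_general (n : ℕ) (α : Fin (n + 1) → ℤ) :
    (∀ s t : Fin (n + 1), s < t → InOmega α →
      InOmega (Function.update (Function.update α s (α s + 1)) t (α t - 1)) →
      ∀ a b : UT n,
        UTweight a = Function.update (Function.update α s (α s + 1)) t (α t - 1) →
        UTweight b = α →
        (Nat.card {c : UT n // UTAdj a c} : ℤ) -
          (Nat.card {c : UT n // UTAdj b c} : ℤ) = α t - α s - 1) ∧
    (InOmega α → Monotone α →
      ∀ a : UT n, UTweight a = α →
        (Nat.card {c : UT n // UTAdj a c} : ℤ) =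
          (∑ k : Fin (n + 1), mval α k) +
            ∑ k : Fin (n + 1), if α k < (k : ℤ) then (k : ℤ) - α k else 0) := by
  constructor
  · intro s t hst _ _ a b ha hb
    have hdeg_a := UT.two_mul_card_utAdj a
    have hdeg_b := UT.two_mul_card_utAdj b
    rw [ha, sum_update_update (fun w : ℤ => w * (w - 1)) α hst.ne] at hdeg_a
    rw [hb] at hdeg_b
    linarith
  · intro hΩ _ a ha
    have hdeg := UT.two_mul_card_utAdj a
    rw [ha] at hdeg
    linarith [two_mul_sum_mval_add α, hΩ.1]

/-- Degree comparison between adjacent weights, and the closed degree formula: if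
`α, α' ∈ ω_n` where `α'` raises `α s` and lowers `α t`, every array of weight `α'` has
`α t - α s - 1` more neighbors than every array of weight `α`; and for a monotone
`α ∈ ω_n`, every array of weight `α` has exactly
`∑ₖ m_k + ∑_{α k < k} (k - α k)` neighbors. -/
theorem degree_of_weight_subgraph (n : ℕ) (hn : 1 ≤ n) (α : Fin (n + 1) → ℤ) :
    (∀ s t : Fin (n + 1), s < t → InOmega α →
      InOmega (Function.update (Function.update α s (α s + 1)) t (α t - 1)) →
      ∀ a b : UT n,
        UTweight a = Function.update (Function.update α s (α s + 1)) t (α t - 1) →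
        UTweight b = α →
        (Nat.card {c : UT n // UTAdj a c} : ℤ) -
          (Nat.card {c : UT n // UTAdj b c} : ℤ) = α t - α s - 1) ∧
    (InOmega α → Monotone α →
      ∀ a : UT n, UTweight a = α →
        (Nat.card {c : UT n // UTAdj a c} : ℤ) =
          (∑ k : Fin (n + 1), mval α k) +
            ∑ k : Fin (n + 1), if α k < (k : ℤ) then (k : ℤ) - α k else 0) :=
  degree_of_weight_subgraph_general n α
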